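/- Let g ∈ SL₂(ℤ) and N a positive integer. The quotient set Γ₁(N)/(Γ₁(N) ∩ g⁻¹Γ₁(N)g) is in bijection with ℤ/n_gℤ, where n_g = lcm(N/gcd(N,ac), N/gcd(N,c²)) for g = [[a,b],[c,d]]. In particular, the index [Γ₁(N) : Γ₁(N) ∩ g⁻¹Γ₁(N)g] equals n_g. -/

import Mathlib

/-!
Reducing modulo `N`, every `A ∈ Γ₁(N)` becomes the unipotent matrix `[[1, b], [0, 1]]` with
`b = A₀₁`, and conjugating by `g = [[a, *], [c, *]]` gives
`[[1 - acb, a²b], [-c²b, 1 + acb]]`. Hence `gAg⁻¹ ∈ Γ₁(N)` iff `N ∣ acb` and `N ∣ c²b`, i.e. iff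
`n_g ∣ b`. Since `A ↦ A₀₁ mod n_g` is a homomorphism `Γ₁(N) → ℤ/n_g`, surjective because of the
powers of `T`, the subgroup `Γ₁(N) ∩ g⁻¹Γ₁(N)g` is its kernel.
-/

open CongruenceSubgroup Matrix MatrixGroups

theorem Nat.dvd_mul_iff_div_gcd_dvd {N : ℕ} (hN : 0 < N) (m x : ℕ) :
    N ∣ m * x ↔ N / N.gcd m ∣ x := by
  rw [Nat.div_dvd_iff_dvd_mul (N.gcd_dvd_left m) (N.gcd_pos_of_pos_left m hN)]
  refine ⟨fun h ↦ ?_, fun h ↦ h.trans (mul_dvd_mul_right (N.gcd_dvd_right m) x)⟩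
  rw [← Nat.gcd_mul_right]
  exact Nat.dvd_gcd (dvd_mul_right N x) h

theorem Int.natCast_dvd_mul_iff_div_gcd_dvd {N : ℕ} (hN : 0 < N) (m x : ℤ) :
    (N : ℤ) ∣ m * x ↔ ((N / Int.gcd N m : ℕ) : ℤ) ∣ x := by
  rw [← Int.natAbs_dvd_natAbs, ← Int.natAbs_dvd_natAbs (b := x), Int.natAbs_mul,
    Int.natAbs_natCast, Int.natAbs_natCast]
  exact Nat.dvd_mul_iff_div_gcd_dvd hN m.natAbs x.natAbs

theorem Subgroup.mem_map_conj_inv_iff {G : Type*} [Group G] (H : Subgroup G) (g x : G) :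
    x ∈ H.map (MulAut.conj g⁻¹).toMonoidHom ↔ g * x * g⁻¹ ∈ H := by
  rw [mem_map_equiv, MulAut.conj_symm_apply, inv_inv]

theorem Matrix.SpecialLinearGroup.conj_unipotent {R : Type*} [CommRing R] (g : SL(2, R)) (b : R) :
    (g : Matrix (Fin 2) (Fin 2) R) * !![1, b; 0, 1] *
        ((g⁻¹ : SL(2, R)) : Matrix (Fin 2) (Fin 2) R) =
      !![1 - g 0 0 * g 1 0 * b, g 0 0 ^ 2 * b; -(g 1 0 ^ 2 * b), 1 + g 0 0 * g 1 0 * b] := by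
  have hdet : g 0 0 * g 1 1 - g 0 1 * g 1 0 = 1 := by
    rw [← det_fin_two]
    exact g.2
  rw [Matrix.SpecialLinearGroup.coe_inv, adjugate_fin_two]
  ext i j
  fin_cases i <;> fin_cases j <;>
    simp only [Fin.zero_eta, Fin.mk_one, mul_apply, of_apply, cons_val', cons_val_fin_one,
      Fin.sum_univ_two, cons_val_zero, cons_val_one, mul_one, mul_zero, add_zero, mul_neg]
  · linear_combination hdet
  · ring
  · ring
  · linear_combination hdet

namespace CongruenceSubgroup

theorem Gamma1_le_Gamma1_of_dvd {n N : ℕ} (h : n ∣ N) : Gamma1 N ≤ Gamma1 n := by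
  intro A hA
  have reduce {x : ℤ} {y : ZMod N} (hx : (x : ZMod N) = y) :
      (x : ZMod n) = ZMod.castHom h (ZMod n) y := by
    rw [← hx, map_intCast]
  obtain ⟨h00, h11, h10⟩ := (Gamma1_mem N A).mp hA
  exact (Gamma1_mem n A).mpr
    ⟨by rw [reduce h00, map_one], by rw [reduce h11, map_one], by rw [reduce h10, map_zero]⟩

theorem T_zpow_mem_Gamma1 (N : ℕ) (k : ℤ) : ModularGroup.T ^ k ∈ Gamma1 N := by
  simp [ModularGroup.coe_T_zpow]

theorem map_eq_unipotent_of_mem_Gamma1 {N : ℕ} {A : SL(2, ℤ)} (hA : A ∈ Gamma1 N) :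
    (Matrix.SpecialLinearGroup.map (Int.castRingHom (ZMod N)) A : Matrix (Fin 2) (Fin 2) (ZMod N)) =
      !![1, (A 0 1 : ZMod N); 0, 1] := by
  obtain ⟨h00, h11, h10⟩ := (Gamma1_mem N A).mp hA
  ext i j
  fin_cases i <;> fin_cases j <;> simp [h00, h11, h10]

theorem conj_mem_Gamma1_iff {N : ℕ} {A : SL(2, ℤ)} (hA : A ∈ Gamma1 N) (g : SL(2, ℤ)) :
    g * A * g⁻¹ ∈ Gamma1 N ↔
      (N : ℤ) ∣ g 0 0 * g 1 0 * A 0 1 ∧ (N : ℤ) ∣ g 1 0 ^ 2 * A 0 1 := by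
  set a : ZMod N := ((g 0 0 : ℤ) : ZMod N)
  set c : ZMod N := ((g 1 0 : ℤ) : ZMod N)
  set b : ZMod N := ((A 0 1 : ℤ) : ZMod N)
  have hconj : (Matrix.SpecialLinearGroup.map (Int.castRingHom (ZMod N)) (g * A * g⁻¹) :
      Matrix (Fin 2) (Fin 2) (ZMod N)) =
        !![1 - a * c * b, a ^ 2 * b; -(c ^ 2 * b), 1 + a * c * b] := by
    simp only [map_mul, map_inv, Matrix.SpecialLinearGroup.coe_mul,
      map_eq_unipotent_of_mem_Gamma1 hA, Matrix.SpecialLinearGroup.conj_unipotent]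
    rfl
  have h00 := congr_fun (congr_fun hconj 0) 0
  have h11 := congr_fun (congr_fun hconj 1) 1
  have h10 := congr_fun (congr_fun hconj 1) 0
  simp only [SL_reduction_mod_hom_val, of_apply, cons_val', cons_val_zero, cons_val_one,
    cons_val_fin_one] at h00 h11 h10
  rw [Gamma1_mem, h00, h11, h10, ← ZMod.intCast_zmod_eq_zero_iff_dvd,
    ← ZMod.intCast_zmod_eq_zero_iff_dvd]
  push_cast
  simp only [sub_eq_self, add_eq_left, neg_eq_zero, and_self_left]
  rfl

def Gamma1UpperRight (N : ℕ) : Gamma1 N →* Multiplicative (ZMod N) where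
  toFun γ := Multiplicative.ofAdd (((γ : SL(2, ℤ)) 0 1 : ℤ) : ZMod N)
  map_one' := by simp
  map_mul' γ δ := by
    obtain ⟨hγ, -, -⟩ := (Gamma1_mem N γ).mp γ.2
    obtain ⟨-, hδ, -⟩ := (Gamma1_mem N δ).mp δ.2
    rw [← ofAdd_add, Subgroup.coe_mul, Matrix.SpecialLinearGroup.coe_mul,
      (two_mul_expl _ _).2.1]
    push_cast
    rw [hγ, hδ, one_mul, mul_one, add_comm]

theorem Gamma1UpperRight_apply (N : ℕ) (γ : Gamma1 N) :
    Gamma1UpperRight N γ = Multiplicative.ofAdd (((γ : SL(2, ℤ)) 0 1 : ℤ) : ZMod N) :=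
  rfl

theorem Gamma1UpperRight_comp_inclusion_surjective {n N : ℕ} (h : n ∣ N) :
    Function.Surjective
      ((Gamma1UpperRight n).comp (Subgroup.inclusion (Gamma1_le_Gamma1_of_dvd h))) := by
  intro k
  refine ⟨⟨_, T_zpow_mem_Gamma1 N (Multiplicative.toAdd k).cast⟩, ?_⟩
  simp [Gamma1UpperRight_apply, ModularGroup.coe_T_zpow]

/-- The number `n_g`. -/
def conjIndex (N : ℕ) (g : SL(2, ℤ)) : ℕ :=
  Nat.lcm (N / Int.gcd N (g 0 0 * g 1 0)) (N / Int.gcd N (g 1 0 ^ 2))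

theorem conjIndex_dvd (N : ℕ) (g : SL(2, ℤ)) : conjIndex N g ∣ N := by
  have div_gcd_dvd (m : ℤ) : N / Int.gcd N m ∣ N :=
    Nat.div_dvd_of_dvd (by simpa using Int.gcd_dvd_natAbs_left N m)
  exact Nat.lcm_dvd (div_gcd_dvd _) (div_gcd_dvd _)

theorem conjIndex_dvd_iff {N : ℕ} (hN : 0 < N) (g : SL(2, ℤ)) (b : ℤ) :
    (conjIndex N g : ℤ) ∣ b ↔ (N : ℤ) ∣ g 0 0 * g 1 0 * b ∧ (N : ℤ) ∣ g 1 0 ^ 2 * b := by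
  rw [Int.natCast_dvd_mul_iff_div_gcd_dvd hN, Int.natCast_dvd_mul_iff_div_gcd_dvd hN,
    Int.natCast_dvd, Int.natCast_dvd, Int.natCast_dvd, conjIndex, Nat.lcm_dvd_iff]

theorem Gamma1_inf_map_conj_subgroupOf_eq_ker {N : ℕ} (hN : 0 < N) (g : SL(2, ℤ)) :
    (Gamma1 N ⊓ (Gamma1 N).map (MulAut.conj g⁻¹).toMonoidHom).subgroupOf (Gamma1 N) =
      ((Gamma1UpperRight (conjIndex N g)).comp
        (Subgroup.inclusion (Gamma1_le_Gamma1_of_dvd (conjIndex_dvd N g)))).ker := by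
  ext γ
  rw [Subgroup.mem_subgroupOf, Subgroup.mem_inf, Subgroup.mem_map_conj_inv_iff,
    conj_mem_Gamma1_iff γ.2, ← conjIndex_dvd_iff hN, MonoidHom.mem_ker, MonoidHom.comp_apply,
    Gamma1UpperRight_apply, ofAdd_eq_one, ZMod.intCast_zmod_eq_zero_iff_dvd]
  exact and_iff_right γ.2

end CongruenceSubgroup

/-- For `g = [[a,b],[c,d]] ∈ SL₂(ℤ)` and `N > 0`, the quotient
`Γ₁(N)/(Γ₁(N) ∩ g⁻¹Γ₁(N)g)` is in bijection with `ℤ/n_gℤ` where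
`n_g = lcm(N/gcd(N,ac), N/gcd(N,c²))`; in particular the index of
`Γ₁(N) ∩ g⁻¹Γ₁(N)g` in `Γ₁(N)` equals `n_g`. -/
theorem gamma1_mod_inter_conj_equiv_zmod (N : ℕ) (hN : 0 < N) (g : Matrix.SpecialLinearGroup (Fin 2) ℤ) :
    Nonempty ((Gamma1 N ⧸
        ((Gamma1 N ⊓ (Gamma1 N).map (MulAut.conj g⁻¹).toMonoidHom).subgroupOf (Gamma1 N))) ≃
      ZMod (Nat.lcm (N / Int.gcd N (g 0 0 * g 1 0)) (N / Int.gcd N (g 1 0 ^ 2)))) ∧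
    ((Gamma1 N ⊓ (Gamma1 N).map (MulAut.conj g⁻¹).toMonoidHom).subgroupOf (Gamma1 N)).index =
      Nat.lcm (N / Int.gcd N (g 0 0 * g 1 0)) (N / Int.gcd N (g 1 0 ^ 2)) := by
  have hsurj := Gamma1UpperRight_comp_inclusion_surjective (conjIndex_dvd N g)
  rw [Gamma1_inf_map_conj_subgroupOf_eq_ker hN g]
  refine ⟨⟨(QuotientGroup.quotientKerEquivOfSurjective _ hsurj).toEquiv.trans
    Multiplicative.toAdd⟩, ?_⟩
  rw [Subgroup.index_ker, MonoidHom.range_eq_top.mpr hsurj, Subgroup.card_top]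
  exact Nat.card_zmod _
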